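/- Let N ≥ 2 be even, let w : Fin N → Fin N be a bijection, and define s, r : ℤ/N²ℤ → Fin N by s(i) = w(i mod N), r(i) = w(i div N). Then for every shift τ ∈ [0,N²), there exists i < N+1 with r(i+τ) = s(i) (indices mod N²). -/
import Mathlib


theorem farch_even_receiver_ahead_rendezvous_within_N_add_one
    (N : ℕ) (hN : 2 ≤ N) (hNeven : Even N)
    (w : Fin N → Fin N) (hw : Function.Bijective w)
    (s r : ZMod (N ^ 2) → Fin N)
    (hs : ∀ i : ℕ, s (i : ZMod (N ^ 2)) = w ⟨i % N, Nat.mod_lt _ (by omega)⟩)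
    (hr : ∀ i : ℕ, (hi : i < N ^ 2) →
      r (i : ZMod (N ^ 2)) = w ⟨i / N, Nat.div_lt_of_lt_mul (by nlinarith)⟩) :
    ∀ τ < N ^ 2, ∃ i < N + 1,
      r ((i + τ : ℕ) : ZMod (N ^ 2)) = s (i : ZMod (N ^ 2)) := by
  intro τ hτ
  have hN2 : 0 < N ^ 2 := by positivity
  have hsq : N ^ 2 = N * N := sq N
  have key : ∀ i : ℕ, r ((i + τ : ℕ) : ZMod (N ^ 2)) =
      w ⟨(i + τ) % N ^ 2 / N,
        Nat.div_lt_of_lt_mul (by rw [← hsq]; exact Nat.mod_lt _ hN2)⟩ := by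
    intro i
    rw [← ZMod.natCast_mod (i + τ) (N ^ 2), hr _ (Nat.mod_lt _ hN2)]
  have hqt : N * (τ / N) + τ % N = τ := Nat.div_add_mod τ N
  set q := τ / N with hqdef
  set t := τ % N with htdef
  have htN : t < N := Nat.mod_lt _ (by omega)
  have hqN : q < N := Nat.div_lt_of_lt_mul (by rw [← hsq]; exact hτ)
  by_cases h1 : q + t < N
  · refine ⟨q, by omega, ?_⟩
    rw [key, hs]
    congr 1
    apply Fin.ext
    show (q + τ) % N ^ 2 / N = q % N
    have e1 : q + τ = N * q + (q + t) := by omega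
    have e2 : q + τ < N ^ 2 := by rw [hsq]; nlinarith
    rw [Nat.mod_eq_of_lt e2, e1, Nat.mul_add_div (by omega),
        Nat.div_eq_of_lt h1, Nat.mod_eq_of_lt hqN, Nat.add_zero]
  · by_cases h2 : q + 1 < N
    · refine ⟨q + 1, by omega, ?_⟩
      rw [key, hs]
      congr 1
      apply Fin.ext
      show (q + 1 + τ) % N ^ 2 / N = (q + 1) % N
      have e1 : q + 1 + τ = N * (q + 1) + (q + 1 + t - N) := by
        have h : N * (q + 1) = N * q + N := by ring
        omega
      have e2 : q + 1 + τ < N ^ 2 := by rw [hsq]; nlinarith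
      rw [Nat.mod_eq_of_lt e2, e1, Nat.mul_add_div (by omega),
          Nat.div_eq_of_lt (by omega), Nat.mod_eq_of_lt h2]
    · refine ⟨N, by omega, ?_⟩
      rw [key, hs]
      congr 1
      apply Fin.ext
      show (N + τ) % N ^ 2 / N = N % N
      have e0 : q = N - 1 := by omega
      have emul : N * q = N * N - N := by rw [e0, Nat.mul_sub, Nat.mul_one]
      have hNN : N ≤ N * N := Nat.le_mul_of_pos_left N (by omega)
      have e1 : N + τ = N ^ 2 + t := by rw [hsq]; omega
      rw [e1, Nat.add_mod_left, Nat.mod_eq_of_lt (by omega),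
          Nat.div_eq_of_lt htN, Nat.mod_self]
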